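/- Let q > 0, N > 0 with Nq = √2, d = 2, φ the Hann window of width q, and ψ(x₁,x₂) = [(2πN)² − 8π²/q²](φ*φ)(x₁)(φ*φ)(x₂) + (π²/q²)[((q/(2π))sin(2π|x₁|/q) + q − |x₁|)(φ*φ)(x₂) + ((q/(2π))sin(2π|x₂|/q) + q − |x₂|)(φ*φ)(x₁)]. Then ψ(0,0) = 3π²/4, and for ‖x‖_∞ ≤ q/2 one has ψ(0) − ψ(x) ≥ (5/4)(π²/q²)‖x‖_∞². -/

import Mathlib

open MeasureTheory Real

/-- The Hann window of width `q`. -/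
noncomputable def hann (q x : ℝ) : ℝ := if |x| < q / 2 then Real.cos (Real.pi * x / q) ^ 2 else 0

/-- Autoconvolution of the Hann window over `ℝ`. -/
noncomputable def hconv (q x : ℝ) : ℝ := ∫ y : ℝ, hann q y * hann q (x - y)

/-- The bivariate localising function `ψ` in its explicit representation. -/
noncomputable def psi2 (q N x₁ x₂ : ℝ) : ℝ :=
  ((2 * π * N) ^ 2 - 8 * π ^ 2 / q ^ 2) * hconv q x₁ * hconv q x₂
    + (π ^ 2 / q ^ 2) *
      ((q / (2 * π) * Real.sin (2 * π * |x₁| / q) + q - |x₁|) * hconv q x₂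
        + (q / (2 * π) * Real.sin (2 * π * |x₂| / q) + q - |x₂|) * hconv q x₁)

/-!
The hypothesis `N q = √2` kills the coefficient `(2πN)² − 8π²/q²`, so `ψ` is `π²/q²` times
`w(x₁)(φ*φ)(x₂) + w(x₂)(φ*φ)(x₁)` with `w(x) = (q/2π) sin(2π|x|/q) + q − |x| ≤ q` (as `sin u ≤ u`).
On `[0, q]` the autoconvolution has the closed form `(q/π) P(πx/q)` with
`P(t) = (π − t)(2 + cos 2t)/8 + 3 sin(2t)/16`, which gives `(φ*φ)(0) = 3q/8` and reduces the bound
`(φ*φ)(x) ≤ 3q/8 − (5/4)x²/q` to the one-variable inequality `P(t) ≤ 3π/8 − 5t²/(4π)` on `[0, π/2]`.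
That follows from Taylor bounds on `sin` and `cos`, expanded at `0` for `t ≤ 4/5` and at `π/2`
beyond. Summing, `ψ(0) − ψ(x) ≥ (5/4)(π²/q²)(x₁² + x₂²)`.
-/

lemma hann_nonneg (q x : ℝ) : 0 ≤ hann q x := by
  unfold hann; split <;> positivity

lemma hann_neg (q x : ℝ) : hann q (-x) = hann q x := by
  simp only [hann, abs_neg, mul_neg, neg_div, cos_neg]

lemma hconv_nonneg (q x : ℝ) : 0 ≤ hconv q x :=
  integral_nonneg fun y => mul_nonneg (hann_nonneg q y) (hann_nonneg q _)

lemma hconv_neg (q x : ℝ) : hconv q (-x) = hconv q x := by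
  rw [hconv, hconv, ← integral_neg_eq_self]
  congr 1; funext y
  rw [hann_neg, show -x - -y = -(x - y) by ring, hann_neg]

lemma hconv_abs (q x : ℝ) : hconv q |x| = hconv q x := by
  rcases abs_choice x with h | h <;> rw [h]
  exact hconv_neg q x

lemma hconv_eq_integral_Ioo {q x : ℝ} (hx : 0 ≤ x) :
    hconv q x =
      ∫ y in Set.Ioo (x - q / 2) (q / 2), cos (π * y / q) ^ 2 * cos (π * (x - y) / q) ^ 2 := by
  rw [hconv, ← integral_indicator measurableSet_Ioo]
  congr 1; funext y
  by_cases hy : y ∈ Set.Ioo (x - q / 2) (q / 2)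
  · obtain ⟨hy1, hy2⟩ := hy
    rw [Set.indicator_of_mem (Set.mem_Ioo.2 ⟨hy1, hy2⟩), hann, hann,
      if_pos (abs_lt.2 ⟨by linarith, hy2⟩), if_pos (abs_lt.2 ⟨by linarith, by linarith⟩)]
  · rw [Set.indicator_of_notMem hy]
    rcases not_and_or.1 hy with h | h
    · rw [hann, hann, if_neg (c := |x - y| < q / 2) (fun hc => by linarith [(abs_lt.1 hc).2]),
        mul_zero]
    · rw [hann, hann, if_neg (c := |y| < q / 2) (fun hc => by linarith [(abs_lt.1 hc).2]),
        zero_mul]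

lemma hasDerivAt_hannProductPrimitive {q : ℝ} (hq : q ≠ 0) (x y : ℝ) :
    HasDerivAt (fun y => y / 4 + q / (8 * π) * sin (2 * π * y / q)
        - q / (8 * π) * sin (2 * π * (x - y) / q) + q / (32 * π) * sin (2 * π * (2 * y - x) / q)
        + y * cos (2 * π * x / q) / 8)
      (cos (π * y / q) ^ 2 * cos (π * (x - y) / q) ^ 2) y := by
  have hlin : ∀ a b : ℝ, HasDerivAt (fun y => 2 * π * (a * y + b) / q) (2 * π * a / q) y := by
    intro a b
    simpa using ((((hasDerivAt_id y).const_mul a).add_const b).const_mul (2 * π)).div_const q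
  have H := (((((hasDerivAt_id y).div_const 4).add
      (((hlin 1 0).sin).const_mul (q / (8 * π)))).sub
      (((hlin (-1) x).sin).const_mul (q / (8 * π)))).add
      (((hlin 2 (-x)).sin).const_mul (q / (32 * π)))).add
      (((hasDerivAt_id y).mul_const (cos (2 * π * x / q))).div_const 8)
  refine (H.congr_deriv ?_).congr_of_eventuallyEq (Filter.Eventually.of_forall fun z => ?_)
  · rw [show 2 * π * (1 * y + 0) / q = 2 * (π * y / q) by ring,
      show 2 * π * (-1 * y + x) / q = 2 * (π * (x - y) / q) by ring,
      show 2 * π * (2 * y + -x) / q = 2 * (π * y / q) - 2 * (π * (x - y) / q) by ring,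
      show 2 * π * x / q = 2 * (π * y / q) + 2 * (π * (x - y) / q) by ring,
      cos_sub, cos_add, cos_two_mul, cos_two_mul]
    field_simp
    ring
  · simp only [Pi.add_apply, Pi.sub_apply, id]
    ring_nf

noncomputable def hconvProfile (t : ℝ) : ℝ :=
  (π - t) * (2 + cos (2 * t)) / 8 + 3 * sin (2 * t) / 16

lemma hconv_eq_mul_hconvProfile {q x : ℝ} (hq : 0 < q) (hx0 : 0 ≤ x) (hx : x ≤ q) :
    hconv q x = q / π * hconvProfile (π * x / q) := by
  rw [hconv_eq_integral_Ioo hx0, ← integral_Ioc_eq_integral_Ioo,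
    ← intervalIntegral.integral_of_le (by linarith),
    intervalIntegral.integral_eq_sub_of_hasDerivAt
      (fun y _ => hasDerivAt_hannProductPrimitive hq.ne' x y)
      (Continuous.intervalIntegrable (by fun_prop) _ _)]
  have hq0 := hq.ne'
  have hπ := pi_pos.ne'
  rw [show 2 * π * (q / 2) / q = π by field_simp,
    show 2 * π * (x - q / 2) / q = 2 * (π * x / q) - π by field_simp,
    show 2 * π * (2 * (q / 2) - x) / q = 2 * π - 2 * (π * x / q) by field_simp,
    show 2 * π * (x - (x - q / 2)) / q = π by field_simp; ring,
    show 2 * π * (2 * (x - q / 2) - x) / q = 2 * (π * x / q) - 2 * π by field_simp; ring,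
    show 2 * π * x / q = 2 * (π * x / q) by ring,
    sin_pi, sin_sub_pi, sin_two_pi_sub, sin_sub_two_pi, hconvProfile]
  field_simp
  ring

lemma hconv_zero {q : ℝ} (hq : 0 < q) : hconv q 0 = 3 * q / 8 := by
  rw [hconv_eq_mul_hconvProfile hq le_rfl hq.le, hconvProfile]
  simp only [mul_zero, zero_div, sub_zero, cos_zero, sin_zero]
  field_simp
  ring

lemma two_div_pi_sq_gt : (0.2015 : ℝ) < 2 / π ^ 2 := by
  rw [lt_div_iff₀ (by positivity)]
  nlinarith [pi_lt_d2, pi_pos]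

lemma sin_two_mul_le_of_mem_Icc {t : ℝ} (h0 : 0 ≤ t) (h1 : t ≤ π / 2) :
    sin (2 * t) ≤ 2 * t - 0.403 * t ^ 3 := by
  have hcos0 : 0 ≤ cos t := cos_nonneg_of_mem_Icc ⟨by linarith [pi_pos], h1⟩
  have hcos : cos t ≤ 1 - 0.2015 * t ^ 2 := by
    have := cos_le_one_sub_mul_cos_sq (x := t) (by rw [abs_of_nonneg h0]; linarith [pi_pos])
    nlinarith [mul_le_mul_of_nonneg_right two_div_pi_sq_gt.le (sq_nonneg t)]
  calc sin (2 * t) = 2 * (sin t * cos t) := by rw [sin_two_mul]; ring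
    _ ≤ 2 * (t * (1 - 0.2015 * t ^ 2)) := by
        gcongr 2 * ?_
        exact mul_le_mul (sin_le h0) hcos hcos0 h0
    _ = 2 * t - 0.403 * t ^ 3 := by ring

lemma cos_two_mul_le_of_nonneg {t : ℝ} (h0 : 0 ≤ t) (h1 : t ^ 2 ≤ 6) :
    cos (2 * t) ≤ 1 - 2 * (t - t ^ 3 / 6) ^ 2 := by
  have hlow0 : 0 ≤ t - t ^ 3 / 6 := by nlinarith
  rw [cos_two_mul', ← sin_sq_add_cos_sq t]
  nlinarith [pow_le_pow_left₀ hlow0 (sin_ge_sub_cube h0) 2]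

lemma cos_two_mul_ge_of_sq_le {s : ℝ} (h : s ^ 2 ≤ 2) :
    2 * (1 - s ^ 2 / 2) ^ 2 - 1 ≤ cos (2 * s) := by
  rw [cos_two_mul]
  have := pow_le_pow_left₀ (by linarith) (one_sub_sq_div_two_le_cos (x := s)) 2
  linarith

lemma hconvProfile_le_of_le {t : ℝ} (h0 : 0 ≤ t) (h1 : t ≤ 4 / 5) :
    hconvProfile t ≤ 3 * π / 8 - 5 * t ^ 2 / (4 * π) := by
  have hπ : 3.1415 < π := by linarith [pi_gt_d6]
  have hsin := sin_two_mul_le_of_mem_Icc h0 (by linarith)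
  have hcos := cos_two_mul_le_of_nonneg h0 (by nlinarith)
  have hbracket : 0 ≤ 2 * π * ((π - t) * (1 - t ^ 2 / 6) ^ 2) - 10 + 0.6045 * π * t := by
    have h1' : (0.7056 : ℝ) ≤ (1 - t ^ 2 / 6) ^ 2 := by nlinarith
    have h2 : (2.3415 * 0.7056 : ℝ) ≤ (π - t) * (1 - t ^ 2 / 6) ^ 2 :=
      mul_le_mul (by linarith) h1' (by norm_num) (by linarith)
    nlinarith [mul_le_mul_of_nonneg_left h2 (by positivity : (0 : ℝ) ≤ 2 * π),
      (by positivity : 0 ≤ 0.6045 * π * t)]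
  have hpoly : 3 * π / 8 - 5 * t ^ 2 / (4 * π)
      - ((π - t) * (2 + (1 - 2 * (t - t ^ 3 / 6) ^ 2)) / 8
        + 3 * (2 * t - 0.403 * t ^ 3) / 16)
      = t ^ 2 * (2 * π * ((π - t) * (1 - t ^ 2 / 6) ^ 2) - 10 + 0.6045 * π * t) / (8 * π) := by
    field_simp; ring
  have hnonneg : 0 ≤ t ^ 2 * (2 * π * ((π - t) * (1 - t ^ 2 / 6) ^ 2) - 10 + 0.6045 * π * t)
      / (8 * π) := by positivity
  have := mul_le_mul_of_nonneg_left hcos (by linarith : 0 ≤ π - t)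
  unfold hconvProfile
  linarith

lemma hconvProfile_le_of_ge {t : ℝ} (h0 : 4 / 5 ≤ t) (h1 : t ≤ π / 2) :
    hconvProfile t ≤ 3 * π / 8 - 5 * t ^ 2 / (4 * π) := by
  obtain ⟨s, hs0, rfl⟩ : ∃ s, 0 ≤ s ∧ t = π / 2 - s := ⟨π / 2 - t, by linarith, by ring⟩
  have hπ : 3.1415 < π := by linarith [pi_gt_d6]
  have hπ' : π < 3.15 := by linarith [pi_lt_d2]
  have hs1 : s < 0.775 := by linarith
  have hsin := sin_two_mul_le_of_mem_Icc hs0 (by linarith)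
  have hcos := cos_two_mul_ge_of_sq_le (s := s) (by nlinarith)
  have hbracket : 0 ≤ 6 * π - (π ^ 2 + 10) * s - 1.3955 * π * s ^ 2 + (π ^ 2 / 4) * s ^ 3
      + (π / 2) * s ^ 4 := by
    nlinarith [mul_nonneg (mul_nonneg hs0 hs0) hs0, sq_nonneg s,
      mul_nonneg (mul_nonneg (mul_nonneg hs0 hs0) hs0) hs0,
      mul_nonneg (mul_nonneg hs0 hs0) (sq_nonneg π),
      mul_le_mul_of_nonneg_left hπ'.le hs0, sq_nonneg (π - 3.1415), sq_nonneg (π * s),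
      mul_nonneg hs0 (sq_nonneg π)]
  have hpoly : 3 * π / 8 - 5 * (π / 2 - s) ^ 2 / (4 * π)
      - ((π / 2 + s) * (2 - (2 * (1 - s ^ 2 / 2) ^ 2 - 1)) / 8
        + 3 * (2 * s - 0.403 * s ^ 3) / 16)
      = s * (6 * π - (π ^ 2 + 10) * s - 1.3955 * π * s ^ 2 + (π ^ 2 / 4) * s ^ 3
      + (π / 2) * s ^ 4) / (8 * π) := by
    field_simp; ring
  have hnonneg : 0 ≤ s * (6 * π - (π ^ 2 + 10) * s - 1.3955 * π * s ^ 2 + (π ^ 2 / 4) * s ^ 3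
      + (π / 2) * s ^ 4) / (8 * π) := by positivity
  have := mul_le_mul_of_nonneg_left hcos (by linarith : 0 ≤ π / 2 + s)
  unfold hconvProfile
  rw [show 2 * (π / 2 - s) = π - 2 * s by ring, cos_pi_sub, sin_pi_sub,
    show π - (π / 2 - s) = π / 2 + s by ring]
  linarith

lemma hconvProfile_le {t : ℝ} (h0 : 0 ≤ t) (h1 : t ≤ π / 2) :
    hconvProfile t ≤ 3 * π / 8 - 5 * t ^ 2 / (4 * π) := by
  rcases le_total t (4 / 5) with h | h
  · exact hconvProfile_le_of_le h0 h
  · exact hconvProfile_le_of_ge h h1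

lemma hconv_le {q x : ℝ} (hq : 0 < q) (hx : |x| ≤ q / 2) :
    hconv q x ≤ 3 * q / 8 - 5 / 4 * x ^ 2 / q := by
  have ht : π * |x| / q ≤ π / 2 := by
    rw [div_le_div_iff₀ hq two_pos]; nlinarith [pi_pos]
  rw [← hconv_abs, hconv_eq_mul_hconvProfile hq (abs_nonneg x) (by linarith)]
  calc q / π * hconvProfile (π * |x| / q)
      ≤ q / π * (3 * π / 8 - 5 * (π * |x| / q) ^ 2 / (4 * π)) := by
        gcongr
        exact hconvProfile_le (by positivity) ht
    _ = 3 * q / 8 - 5 / 4 * x ^ 2 / q := by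
        field_simp
        rw [sq_abs]

noncomputable def psiWeight (q x : ℝ) : ℝ := q / (2 * π) * sin (2 * π * |x| / q) + q - |x|

lemma psiWeight_zero (q : ℝ) : psiWeight q 0 = q := by
  simp [psiWeight]

lemma psiWeight_le {q : ℝ} (hq : 0 < q) (x : ℝ) : psiWeight q x ≤ q := by
  have hsin := mul_le_mul_of_nonneg_left (sin_le (by positivity : 0 ≤ 2 * π * |x| / q))
    (by positivity : 0 ≤ q / (2 * π))
  have hcancel : q / (2 * π) * (2 * π * |x| / q) = |x| := by
    field_simp [hq.ne', pi_pos.ne']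
  rw [psiWeight]
  linarith

lemma psiWeight_mul_hconv_le {q : ℝ} (hq : 0 < q) (x : ℝ) {y : ℝ} (hy : |y| ≤ q / 2) :
    psiWeight q x * hconv q y ≤ 3 * q ^ 2 / 8 - 5 / 4 * y ^ 2 :=
  calc psiWeight q x * hconv q y ≤ q * (3 * q / 8 - 5 / 4 * y ^ 2 / q) :=
        mul_le_mul (psiWeight_le hq x) (hconv_le hq hy) (hconv_nonneg q y) hq.le
    _ = 3 * q ^ 2 / 8 - 5 / 4 * y ^ 2 := by field_simp

lemma psi2_eq_of_mul_eq_sqrt_two {q N : ℝ} (hq : q ≠ 0) (h : N * q = √2) (x₁ x₂ : ℝ) :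
    psi2 q N x₁ x₂ =
      π ^ 2 / q ^ 2 * (psiWeight q x₁ * hconv q x₂ + psiWeight q x₂ * hconv q x₁) := by
  have hN : N ^ 2 = 2 / q ^ 2 := by
    rw [eq_div_iff (pow_ne_zero 2 hq), ← mul_pow, h, sq_sqrt zero_le_two]
  rw [psi2, mul_pow, hN]
  simp only [psiWeight]
  ring

theorem psi2_value_and_decay_general (q N : ℝ) (hq : 0 < q)
    (h : N * q = Real.sqrt 2) :
    psi2 q N 0 0 = 3 * π ^ 2 / 4 ∧
    ∀ x₁ x₂ : ℝ, max |x₁| |x₂| ≤ q / 2 →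
      psi2 q N 0 0 - psi2 q N x₁ x₂ ≥ 5 / 4 * (π ^ 2 / q ^ 2) * (max |x₁| |x₂|) ^ 2 := by
  have hpsi := psi2_eq_of_mul_eq_sqrt_two hq.ne' h
  have hvalue : psi2 q N 0 0 = 3 * π ^ 2 / 4 := by
    rw [hpsi, psiWeight_zero, hconv_zero hq]
    field_simp
    ring
  refine ⟨hvalue, fun x₁ x₂ hx => ?_⟩
  have h₁ := psiWeight_mul_hconv_le hq x₁ (le_of_max_le_right hx)
  have h₂ := psiWeight_mul_hconv_le hq x₂ (le_of_max_le_left hx)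
  have hmax : max |x₁| |x₂| ^ 2 ≤ x₁ ^ 2 + x₂ ^ 2 := by
    rcases max_choice |x₁| |x₂| with hm | hm <;> rw [hm, sq_abs] <;>
      linarith [sq_nonneg x₁, sq_nonneg x₂]
  have hsum := mul_le_mul_of_nonneg_left (show 5 / 4 * max |x₁| |x₂| ^ 2
      ≤ 3 * q ^ 2 / 4 - (psiWeight q x₁ * hconv q x₂ + psiWeight q x₂ * hconv q x₁) by linarith)
    (by positivity : 0 ≤ π ^ 2 / q ^ 2)
  rw [hvalue, hpsi, ge_iff_le, show 3 * π ^ 2 / 4 = π ^ 2 / q ^ 2 * (3 * q ^ 2 / 4) by field_simp]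
  linarith

theorem psi2_value_and_decay (q N : ℝ) (hq : 0 < q) (hN : 0 < N)
    (h : N * q = Real.sqrt 2) :
    psi2 q N 0 0 = 3 * π ^ 2 / 4 ∧
    ∀ x₁ x₂ : ℝ, max |x₁| |x₂| ≤ q / 2 →
      psi2 q N 0 0 - psi2 q N x₁ x₂ ≥ 5 / 4 * (π ^ 2 / q ^ 2) * (max |x₁| |x₂|) ^ 2 :=
  psi2_value_and_decay_general q N hq h
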